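/- Traced evaluation preserves the prefix-labeling invariant: if the environment γ is prefix-labeled and γ, e ⇓ v, T, then v and T are prefix-labeled; moreover if γ and v are prefix-labeled and γ, x ∈ v, e ⇓* v', Θ then v' and Θ are prefix-labeled, dom(Θ) = dom(v), and dom(v) is a sub-prefix code of dom(v'). -/

import Mathlib

/-! Core syntax of multiset-valued NRC with labeled collections. -/

abbrev Label := List ℕ
abbrev Var := String
abbrev FName := String

/-- Values: constants, records, and labeled collections
(finite maps from labels to values, represented as association lists). -/
inductive Value : Type where
  | int : ℤ → Value
  | bool : Bool → Value
  | record : List (FName × Value) → Value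
  | coll : List (Label × Value) → Value

abbrev Env := List (Var × Value)

/-- `ℓ · v` : prepend `ℓ` to every label of a labeled collection. -/
def relabel (ℓ : Label) (ws : List (Label × Value)) : List (Label × Value) :=
  ws.map fun q => (ℓ ++ q.1, q.2)

/-- Sum of a collection of integers (defined only when all elements are integers). -/
def sumColl : List (Label × Value) → Option ℤ
  | [] => some 0
  | (_, .int n) :: t => (sumColl t).map (n + ·)
  | _ => none

/-- NRC expressions. -/
inductive Expr : Type where
  | int : ℤ → Expr
  | bool : Bool → Expr
  | var : Var → Expr
  | prim : (ℤ → ℤ → ℤ) → Expr → Expr → Expr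
  | lett : Var → Expr → Expr → Expr
  | rcd : List (FName × Expr) → Expr
  | proj : Expr → FName → Expr
  | ite : Expr → Expr → Expr → Expr
  | empty : Expr
  | sng : Expr → Expr
  | union : Expr → Expr → Expr
  | comp : Var → Expr → Expr → Expr   -- ⋃ { body | x ∈ src }
  | isEmpty : Expr → Expr
  | sum : Expr → Expr

/-- NRC traces (with a hole, used for slicing). -/
inductive Trace : Type where
  | int : ℤ → Trace
  | bool : Bool → Trace
  | var : Var → Trace
  | prim : (ℤ → ℤ → ℤ) → Trace → Trace → Trace
  | lett : Var → Trace → Trace → Trace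
  | rcd : List (FName × Trace) → Trace
  | proj : Trace → FName → Trace
  | ifThen : Trace → Expr → Expr → Trace → Trace
  | ifElse : Trace → Expr → Expr → Trace → Trace
  | empty : Trace
  | sng : Trace → Trace
  | union : Trace → Trace → Trace
  | comp : Expr → Var → Trace → List (Label × Trace) → Trace
  | isEmpty : Trace → Trace
  | sum : Trace → Trace
  | hole : Trace

/-! Traced evaluation γ, e ⇓ v, T (Figure 2). -/
mutual
inductive Eval : Env → Expr → Value → Trace → Prop where
  | int : ∀ {γ n}, Eval γ (.int n) (.int n) (.int n)
  | bool : ∀ {γ b}, Eval γ (.bool b) (.bool b) (.bool b)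
  | var : ∀ {γ x v}, γ.lookup x = some v → Eval γ (.var x) v (.var x)
  | prim : ∀ {γ f e₁ e₂ n₁ n₂ T₁ T₂},
      Eval γ e₁ (.int n₁) T₁ → Eval γ e₂ (.int n₂) T₂ →
      Eval γ (.prim f e₁ e₂) (.int (f n₁ n₂)) (.prim f T₁ T₂)
  | lett : ∀ {γ x e₁ e₂ v₁ v₂ T₁ T₂},
      Eval γ e₁ v₁ T₁ → Eval ((x, v₁) :: γ) e₂ v₂ T₂ →
      Eval γ (.lett x e₁ e₂) v₂ (.lett x T₁ T₂)
  | rcd : ∀ {γ es vs Ts},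
      EvalFields γ es vs Ts → Eval γ (.rcd es) (.record vs) (.rcd Ts)
  | proj : ∀ {γ e A vs v T},
      Eval γ e (.record vs) T → vs.lookup A = some v →
      Eval γ (.proj e A) v (.proj T A)
  | ifTrue : ∀ {γ e e₁ e₂ v₁ T T₁},
      Eval γ e (.bool true) T → Eval γ e₁ v₁ T₁ →
      Eval γ (.ite e e₁ e₂) v₁ (.ifThen T e₁ e₂ T₁)
  | ifFalse : ∀ {γ e e₁ e₂ v₂ T T₂},
      Eval γ e (.bool false) T → Eval γ e₂ v₂ T₂ →
      Eval γ (.ite e e₁ e₂) v₂ (.ifElse T e₁ e₂ T₂)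
  | empty : ∀ {γ}, Eval γ .empty (.coll []) .empty
  | sng : ∀ {γ e v T}, Eval γ e v T → Eval γ (.sng e) (.coll [([], v)]) (.sng T)
  | union : ∀ {γ e₁ e₂ w₁ w₂ T₁ T₂},
      Eval γ e₁ (.coll w₁) T₁ → Eval γ e₂ (.coll w₂) T₂ →
      Eval γ (.union e₁ e₂) (.coll (relabel [1] w₁ ++ relabel [2] w₂)) (.union T₁ T₂)
  | comp : ∀ {γ x ebody esrc w w' T Θ},
      Eval γ esrc (.coll w) T → EvalStar γ x ebody w w' Θ →
      Eval γ (.comp x ebody esrc) (.coll w') (.comp ebody x T Θ)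
  | isEmptyT : ∀ {γ e T},
      Eval γ e (.coll []) T → Eval γ (.isEmpty e) (.bool true) (.isEmpty T)
  | isEmptyF : ∀ {γ e w T},
      Eval γ e (.coll w) T → w ≠ [] →
      Eval γ (.isEmpty e) (.bool false) (.isEmpty T)
  | sum : ∀ {γ e w n T},
      Eval γ e (.coll w) T → sumColl w = some n →
      Eval γ (.sum e) (.int n) (.sum T)

/-- Iteration judgment γ, x ∈ v, e ⇓* v', Θ. -/
inductive EvalStar : Env → Var → Expr → List (Label × Value) →
    List (Label × Value) → List (Label × Trace) → Prop where
  | nil : ∀ {γ x e}, EvalStar γ x e [] [] []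
  | cons : ∀ {γ x e ℓ v rest w w' T Θ},
      Eval ((x, v) :: γ) e (.coll w) T → EvalStar γ x e rest w' Θ →
      EvalStar γ x e ((ℓ, v) :: rest) (relabel ℓ w ++ w') ((ℓ, T) :: Θ)

inductive EvalFields : Env → List (FName × Expr) → List (FName × Value) →
    List (FName × Trace) → Prop where
  | nil : ∀ {γ}, EvalFields γ [] [] []
  | cons : ∀ {γ A e es v vs T Ts},
      Eval γ e v T → EvalFields γ es vs Ts →
      EvalFields γ ((A, e) :: es) ((A, v) :: vs) ((A, T) :: Ts)
end

/-! Trace replay γ, T ↷ v (Figure 3). -/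
mutual
inductive Replay : Env → Trace → Value → Prop where
  | int : ∀ {γ n}, Replay γ (.int n) (.int n)
  | bool : ∀ {γ b}, Replay γ (.bool b) (.bool b)
  | var : ∀ {γ x v}, γ.lookup x = some v → Replay γ (.var x) v
  | prim : ∀ {γ f T₁ T₂ n₁ n₂},
      Replay γ T₁ (.int n₁) → Replay γ T₂ (.int n₂) →
      Replay γ (.prim f T₁ T₂) (.int (f n₁ n₂))
  | lett : ∀ {γ x T₁ T₂ v₁ v₂},
      Replay γ T₁ v₁ → Replay ((x, v₁) :: γ) T₂ v₂ →
      Replay γ (.lett x T₁ T₂) v₂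
  | rcd : ∀ {γ Ts vs}, ReplayFields γ Ts vs → Replay γ (.rcd Ts) (.record vs)
  | proj : ∀ {γ T A vs v},
      Replay γ T (.record vs) → vs.lookup A = some v → Replay γ (.proj T A) v
  | ifThen : ∀ {γ T e₁ e₂ T₁ v₁},
      Replay γ T (.bool true) → Replay γ T₁ v₁ →
      Replay γ (.ifThen T e₁ e₂ T₁) v₁
  | ifElse : ∀ {γ T e₁ e₂ T₂ v₂},
      Replay γ T (.bool false) → Replay γ T₂ v₂ →
      Replay γ (.ifElse T e₁ e₂ T₂) v₂
  | empty : ∀ {γ}, Replay γ .empty (.coll [])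
  | sng : ∀ {γ T v}, Replay γ T v → Replay γ (.sng T) (.coll [([], v)])
  | union : ∀ {γ T₁ T₂ w₁ w₂},
      Replay γ T₁ (.coll w₁) → Replay γ T₂ (.coll w₂) →
      Replay γ (.union T₁ T₂) (.coll (relabel [1] w₁ ++ relabel [2] w₂))
  | comp : ∀ {γ e x T Θ w w'},
      Replay γ T (.coll w) → ReplayStar γ x w Θ w' →
      Replay γ (.comp e x T Θ) (.coll w')
  | isEmptyT : ∀ {γ T},
      Replay γ T (.coll []) → Replay γ (.isEmpty T) (.bool true)
  | isEmptyF : ∀ {γ T w},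
      Replay γ T (.coll w) → w ≠ [] → Replay γ (.isEmpty T) (.bool false)
  | sum : ∀ {γ T w n},
      Replay γ T (.coll w) → sumColl w = some n → Replay γ (.sum T) (.int n)

/-- Iterated replay γ, x ∈ v, Θ ↷* v'. -/
inductive ReplayStar : Env → Var → List (Label × Value) →
    List (Label × Trace) → List (Label × Value) → Prop where
  | nil : ∀ {γ x Θ}, ReplayStar γ x [] Θ []
  | cons : ∀ {γ x ℓ v rest Θ T w w'},
      Θ.lookup ℓ = some T → Replay ((x, v) :: γ) T (.coll w) →
      ReplayStar γ x rest Θ w' →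
      ReplayStar γ x ((ℓ, v) :: rest) Θ (relabel ℓ w ++ w')

inductive ReplayFields : Env → List (FName × Trace) → List (FName × Value) → Prop where
  | nil : ∀ {γ}, ReplayFields γ [] []
  | cons : ∀ {γ A T Ts v vs},
      Replay γ T v → ReplayFields γ Ts vs →
      ReplayFields γ ((A, T) :: Ts) ((A, v) :: vs)
end

def IsPrefixCode (L : Set Label) : Prop :=
  ∀ x ∈ L, ∀ y ∈ L, x <+: y → x = y

/-- The domain (set of labels) of a labeled collection (or trace set). -/
def domOf {β : Type*} (ws : List (Label × β)) : Set Label :=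
  {ℓ | ∃ b, (ℓ, b) ∈ ws}

/-- `L'` is a sub-prefix code of `L`. -/
def SubPrefixCode (L' L : Set Label) : Prop :=
  IsPrefixCode L' ∧ ∀ x ∈ L, ∃ y ∈ L', y <+: x

/-- A value is prefix-labeled if every collection occurring in it has
distinct labels forming a prefix code. -/
inductive PLValue : Value → Prop where
  | int : ∀ {n}, PLValue (.int n)
  | bool : ∀ {b}, PLValue (.bool b)
  | record : ∀ {vs : List (FName × Value)},
      (∀ q ∈ vs, PLValue q.2) → PLValue (.record vs)
  | coll : ∀ {ws : List (Label × Value)},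
      (ws.map Prod.fst).Nodup → IsPrefixCode (domOf ws) →
      (∀ q ∈ ws, PLValue q.2) → PLValue (.coll ws)

def PLEnv (γ : Env) : Prop := ∀ q ∈ γ, PLValue q.2

/-- A trace is prefix-labeled if every labeled trace set occurring in it has
distinct labels forming a prefix code. -/
inductive PLTrace : Trace → Prop where
  | int : ∀ {n}, PLTrace (.int n)
  | bool : ∀ {b}, PLTrace (.bool b)
  | var : ∀ {x}, PLTrace (.var x)
  | prim : ∀ {f T₁ T₂}, PLTrace T₁ → PLTrace T₂ → PLTrace (.prim f T₁ T₂)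
  | lett : ∀ {x T₁ T₂}, PLTrace T₁ → PLTrace T₂ → PLTrace (.lett x T₁ T₂)
  | rcd : ∀ {Ts : List (FName × Trace)},
      (∀ q ∈ Ts, PLTrace q.2) → PLTrace (.rcd Ts)
  | proj : ∀ {T A}, PLTrace T → PLTrace (.proj T A)
  | ifThen : ∀ {T e₁ e₂ T₁}, PLTrace T → PLTrace T₁ → PLTrace (.ifThen T e₁ e₂ T₁)
  | ifElse : ∀ {T e₁ e₂ T₂}, PLTrace T → PLTrace T₂ → PLTrace (.ifElse T e₁ e₂ T₂)
  | empty : PLTrace .empty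
  | sng : ∀ {T}, PLTrace T → PLTrace (.sng T)
  | union : ∀ {T₁ T₂}, PLTrace T₁ → PLTrace T₂ → PLTrace (.union T₁ T₂)
  | comp : ∀ {e x T} {Θ : List (Label × Trace)},
      PLTrace T → (Θ.map Prod.fst).Nodup → IsPrefixCode (domOf Θ) →
      (∀ q ∈ Θ, PLTrace q.2) → PLTrace (.comp e x T Θ)
  | isEmpty : ∀ {T}, PLTrace T → PLTrace (.isEmpty T)
  | sum : ∀ {T}, PLTrace T → PLTrace (.sum T)
  | hole : PLTrace .hole

/-- A labeled trace set is prefix-labeled. -/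
def PLTraceSet (Θ : List (Label × Trace)) : Prop :=
  (Θ.map Prod.fst).Nodup ∧ IsPrefixCode (domOf Θ) ∧ ∀ q ∈ Θ, PLTrace q.2

/-!
Induction on the derivation. The only case with content is an iteration step over
`(ℓ, v) :: rest`, whose result has labels `ℓ · dom(w) ∪ dom(w')`. By induction `dom(rest)` is a
sub-prefix code of `dom(w')`, so every label of `w'` extends a label of `rest`; since `ℓ` is
incomparable with all of those, the labels of `ℓ · w` and of `w'` are pairwise incomparable and
the union is again a prefix code, without repetitions. The same argument shows that
`insert ℓ dom(rest)` is a sub-prefix code of the result.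
-/

theorem List.mem_of_lookup_eq_some {α β : Type*} [BEq α] [LawfulBEq α] {l : List (α × β)}
    {k : α} {v : β} (h : l.lookup k = some v) : (k, v) ∈ l := by
  induction l with
  | nil => simp at h
  | cons p t ih =>
    obtain ⟨a, b⟩ := p
    by_cases hk : k = a
    · subst hk
      simp_all
    · simp only [List.lookup_cons, beq_false_of_ne hk] at h
      exact .tail _ (ih h)

def PrefixIncomparable (x y : Label) : Prop :=
  ¬ x <+: y ∧ ¬ y <+: x

theorem PrefixIncomparable.symm {x y : Label} (h : PrefixIncomparable x y) :
    PrefixIncomparable y x :=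
  ⟨h.2, h.1⟩

theorem PrefixIncomparable.ne {x y : Label} (h : PrefixIncomparable x y) : x ≠ y := by
  rintro rfl
  exact h.1 (List.prefix_refl x)

/-- Two labels with a common extension are comparable. -/
theorem PrefixIncomparable.of_prefix {x y a b : Label} (h : PrefixIncomparable x y)
    (ha : x <+: a) (hb : y <+: b) : PrefixIncomparable a b := by
  have key : ∀ {x y a b : Label}, PrefixIncomparable x y → x <+: a → y <+: b → ¬ a <+: b :=
    fun h ha hb hab => (List.prefix_or_prefix_of_prefix (ha.trans hab) hb).elim h.1 h.2
  exact ⟨key h ha hb, key h.symm hb ha⟩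

namespace IsPrefixCode

variable {L L₁ L₂ : Set Label}

theorem mono (h : IsPrefixCode L) {L' : Set Label} (hs : L' ⊆ L) : IsPrefixCode L' :=
  fun x hx y hy => h x (hs hx) y (hs hy)

theorem prefixIncomparable (h : IsPrefixCode L) {x y : Label} (hx : x ∈ L) (hy : y ∈ L)
    (hne : x ≠ y) : PrefixIncomparable x y :=
  ⟨fun hxy => hne (h x hx y hy hxy), fun hyx => hne (h y hy x hx hyx).symm⟩

theorem empty : IsPrefixCode ∅ := by
  simp [IsPrefixCode]

theorem singleton (ℓ : Label) : IsPrefixCode {ℓ} := by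
  simp [IsPrefixCode]

theorem image_append (h : IsPrefixCode L) (ℓ : Label) : IsPrefixCode ((ℓ ++ ·) '' L) := by
  rintro _ ⟨x, hx, rfl⟩ _ ⟨y, hy, rfl⟩ hxy
  rw [h x hx y hy ((List.prefix_append_right_inj ℓ).1 hxy)]

theorem union (h₁ : IsPrefixCode L₁) (h₂ : IsPrefixCode L₂)
    (hcross : ∀ x ∈ L₁, ∀ y ∈ L₂, PrefixIncomparable x y) : IsPrefixCode (L₁ ∪ L₂) := by
  rintro x (hx | hx) y (hy | hy) hxy
  · exact h₁ x hx y hy hxy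
  · exact absurd hxy (hcross x hx y hy).1
  · exact absurd hxy (hcross y hy x hx).2
  · exact h₂ x hx y hy hxy

end IsPrefixCode

section domOf

variable {β : Type*}

theorem mem_domOf {ws : List (Label × β)} {ℓ : Label} : ℓ ∈ domOf ws ↔ ℓ ∈ ws.map Prod.fst := by
  simp [domOf]

@[simp]
theorem domOf_nil : domOf ([] : List (Label × β)) = ∅ := by
  simp [domOf]

@[simp]
theorem domOf_cons {ℓ : Label} {b : β} {ws : List (Label × β)} :
    domOf ((ℓ, b) :: ws) = insert ℓ (domOf ws) := by
  ext m
  simp [domOf, exists_or, eq_comm]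

theorem domOf_append {ws₁ ws₂ : List (Label × β)} :
    domOf (ws₁ ++ ws₂) = domOf ws₁ ∪ domOf ws₂ := by
  ext m
  simp [domOf, exists_or]

end domOf

theorem map_fst_relabel {ℓ : Label} {ws : List (Label × Value)} :
    (relabel ℓ ws).map Prod.fst = (ws.map Prod.fst).map (ℓ ++ ·) := by
  simp [relabel]

theorem domOf_relabel {ℓ : Label} {ws : List (Label × Value)} :
    domOf (relabel ℓ ws) = (ℓ ++ ·) '' domOf ws := by
  ext m
  simp only [mem_domOf, map_fst_relabel, List.mem_map, Set.mem_image]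

theorem plValue_coll_iff {ws : List (Label × Value)} :
    PLValue (.coll ws) ↔
      (ws.map Prod.fst).Nodup ∧ IsPrefixCode (domOf ws) ∧ ∀ q ∈ ws, PLValue q.2 :=
  ⟨fun | .coll hnd hpc hv => ⟨hnd, hpc, hv⟩, fun ⟨hnd, hpc, hv⟩ => .coll hnd hpc hv⟩

theorem PLEnv.cons {γ : Env} {x : Var} {v : Value} (hγ : PLEnv γ) (hv : PLValue v) :
    PLEnv ((x, v) :: γ) :=
  List.forall_mem_cons.2 ⟨hv, hγ⟩

theorem PLEnv.lookup {γ : Env} {x : Var} {v : Value} (hγ : PLEnv γ)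
    (h : γ.lookup x = some v) : PLValue v :=
  hγ _ (List.mem_of_lookup_eq_some h)

namespace PLValue

theorem record_lookup {vs : List (FName × Value)} {A : FName} {v : Value}
    (h : PLValue (.record vs)) (hA : vs.lookup A = some v) : PLValue v := by
  cases h with
  | record hvs => exact hvs _ (List.mem_of_lookup_eq_some hA)

theorem coll_nil : PLValue (.coll []) :=
  plValue_coll_iff.2 ⟨List.nodup_nil, by simpa using IsPrefixCode.empty, by simp⟩

theorem coll_singleton {ℓ : Label} {v : Value} (hv : PLValue v) : PLValue (.coll [(ℓ, v)]) :=
  plValue_coll_iff.2 ⟨List.nodup_singleton ℓ, by simpa using IsPrefixCode.singleton ℓ, by simpa⟩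

theorem coll_cons_inv {ℓ : Label} {v : Value} {ws : List (Label × Value)}
    (h : PLValue (.coll ((ℓ, v) :: ws))) :
    ℓ ∉ domOf ws ∧ IsPrefixCode (insert ℓ (domOf ws)) ∧ PLValue v ∧ PLValue (.coll ws) := by
  obtain ⟨hnd, hpc, hvs⟩ := plValue_coll_iff.1 h
  rw [List.map_cons, List.nodup_cons, ← mem_domOf] at hnd
  rw [domOf_cons] at hpc
  rw [List.forall_mem_cons] at hvs
  exact ⟨hnd.1, hpc, hvs.1, plValue_coll_iff.2 ⟨hnd.2, hpc.mono (Set.subset_insert ℓ _), hvs.2⟩⟩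

theorem coll_relabel {ws : List (Label × Value)} (h : PLValue (.coll ws)) (ℓ : Label) :
    PLValue (.coll (relabel ℓ ws)) := by
  obtain ⟨hnd, hpc, hvs⟩ := plValue_coll_iff.1 h
  refine plValue_coll_iff.2 ⟨?_, ?_, ?_⟩
  · rw [map_fst_relabel]
    exact hnd.map (List.append_right_injective ℓ)
  · rw [domOf_relabel]
    exact hpc.image_append ℓ
  · simp only [relabel, List.mem_map]
    rintro _ ⟨q, hq, rfl⟩
    exact hvs q hq

theorem coll_append {ws₁ ws₂ : List (Label × Value)}
    (h₁ : PLValue (.coll ws₁)) (h₂ : PLValue (.coll ws₂))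
    (hcross : ∀ x ∈ domOf ws₁, ∀ y ∈ domOf ws₂, PrefixIncomparable x y) :
    PLValue (.coll (ws₁ ++ ws₂)) := by
  obtain ⟨hnd₁, hpc₁, hvs₁⟩ := plValue_coll_iff.1 h₁
  obtain ⟨hnd₂, hpc₂, hvs₂⟩ := plValue_coll_iff.1 h₂
  refine plValue_coll_iff.2 ⟨?_, ?_, ?_⟩
  · rw [List.map_append]
    exact hnd₁.append hnd₂ fun x hx₁ hx₂ =>
      (hcross x (mem_domOf.2 hx₁) x (mem_domOf.2 hx₂)).ne rfl
  · rw [domOf_append]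
    exact hpc₁.union hpc₂ hcross
  · simp only [List.mem_append]
    rintro q (hq | hq)
    exacts [hvs₁ q hq, hvs₂ q hq]

theorem coll_union {ws₁ ws₂ : List (Label × Value)}
    (h₁ : PLValue (.coll ws₁)) (h₂ : PLValue (.coll ws₂)) :
    PLValue (.coll (relabel [1] ws₁ ++ relabel [2] ws₂)) := by
  refine coll_append (h₁.coll_relabel [1]) (h₂.coll_relabel [2]) ?_
  simp only [domOf_relabel]
  rintro _ ⟨x, -, rfl⟩ _ ⟨y, -, rfl⟩
  exact PrefixIncomparable.of_prefix ⟨by decide, by decide⟩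
    (List.prefix_append [1] x) (List.prefix_append [2] y)

end PLValue

section IterationStep

variable {ℓ : Label} {L : Set Label} {w w' : List (Label × Value)}

theorem PLValue.coll_relabel_append (hpc : IsPrefixCode (insert ℓ L)) (hℓ : ℓ ∉ L)
    (hw : PLValue (.coll w)) (hw' : PLValue (.coll w')) (hsub : SubPrefixCode L (domOf w')) :
    PLValue (.coll (relabel ℓ w ++ w')) := by
  refine hw.coll_relabel ℓ |>.coll_append hw' ?_
  rw [domOf_relabel]
  rintro _ ⟨x, -, rfl⟩ y hy
  obtain ⟨ℓ', hℓ', hℓ'y⟩ := hsub.2 y hy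
  have hne : ℓ ≠ ℓ' := fun h => hℓ (h ▸ hℓ')
  exact (hpc.prefixIncomparable (Set.mem_insert ℓ L) (Set.mem_insert_of_mem ℓ hℓ') hne).of_prefix
    (List.prefix_append ℓ x) hℓ'y

theorem SubPrefixCode.relabel_append (hpc : IsPrefixCode (insert ℓ L))
    (hsub : SubPrefixCode L (domOf w')) :
    SubPrefixCode (insert ℓ L) (domOf (relabel ℓ w ++ w')) := by
  refine ⟨hpc, ?_⟩
  rw [domOf_append, domOf_relabel]
  rintro _ (⟨x, -, rfl⟩ | hy)
  · exact ⟨ℓ, Set.mem_insert ℓ L, List.prefix_append ℓ x⟩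
  · obtain ⟨ℓ', hℓ', hℓ'y⟩ := hsub.2 _ hy
    exact ⟨ℓ', Set.mem_insert_of_mem ℓ hℓ', hℓ'y⟩

theorem PLTraceSet.cons {T : Trace} {Θ : List (Label × Trace)} (hΘ : PLTraceSet Θ)
    (hT : PLTrace T) (hℓ : ℓ ∉ domOf Θ) (hpc : IsPrefixCode (insert ℓ (domOf Θ))) :
    PLTraceSet ((ℓ, T) :: Θ) := by
  refine ⟨?_, by rwa [domOf_cons], ?_⟩
  · rw [List.map_cons, List.nodup_cons, ← mem_domOf]
    exact ⟨hℓ, hΘ.1⟩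
  · exact List.forall_mem_cons.2 ⟨hT, hΘ.2.2⟩

end IterationStep

mutual

theorem Eval.prefixLabeled {γ : Env} {e : Expr} {v : Value} {T : Trace} (hγ : PLEnv γ) :
    Eval γ e v T → PLValue v ∧ PLTrace T
  | .int => ⟨.int, .int⟩
  | .bool => ⟨.bool, .bool⟩
  | .var h => ⟨hγ.lookup h, .var⟩
  | .prim h₁ h₂ => ⟨.int, .prim (h₁.prefixLabeled hγ).2 (h₂.prefixLabeled hγ).2⟩
  | .lett h₁ h₂ =>
    have ih₁ := h₁.prefixLabeled hγ
    have ih₂ := h₂.prefixLabeled (hγ.cons ih₁.1)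
    ⟨ih₂.1, .lett ih₁.2 ih₂.2⟩
  | .rcd hs =>
    have ih := hs.prefixLabeled hγ
    ⟨.record ih.1, .rcd ih.2⟩
  | .proj h hA =>
    have ih := h.prefixLabeled hγ
    ⟨ih.1.record_lookup hA, .proj ih.2⟩
  | .ifTrue h h₁ =>
    have ih₁ := h₁.prefixLabeled hγ
    ⟨ih₁.1, .ifThen (h.prefixLabeled hγ).2 ih₁.2⟩
  | .ifFalse h h₂ =>
    have ih₂ := h₂.prefixLabeled hγ
    ⟨ih₂.1, .ifElse (h.prefixLabeled hγ).2 ih₂.2⟩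
  | .empty => ⟨.coll_nil, .empty⟩
  | .sng h =>
    have ih := h.prefixLabeled hγ
    ⟨.coll_singleton ih.1, .sng ih.2⟩
  | .union h₁ h₂ =>
    have ih₁ := h₁.prefixLabeled hγ
    have ih₂ := h₂.prefixLabeled hγ
    ⟨ih₁.1.coll_union ih₂.1, .union ih₁.2 ih₂.2⟩
  | .comp hsrc hbody =>
    have ih := hsrc.prefixLabeled hγ
    have ⟨hw', hΘ, _⟩ := hbody.prefixLabeled hγ ih.1
    ⟨hw', .comp ih.2 hΘ.1 hΘ.2.1 hΘ.2.2⟩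
  | .isEmptyT h => ⟨.bool, .isEmpty (h.prefixLabeled hγ).2⟩
  | .isEmptyF h _ => ⟨.bool, .isEmpty (h.prefixLabeled hγ).2⟩
  | .sum h _ => ⟨.int, .sum (h.prefixLabeled hγ).2⟩

theorem EvalStar.prefixLabeled {γ : Env} {x : Var} {e : Expr} {w w' : List (Label × Value)}
    {Θ : List (Label × Trace)} (hγ : PLEnv γ) (hw : PLValue (.coll w)) :
    EvalStar γ x e w w' Θ →
      PLValue (.coll w') ∧ PLTraceSet Θ ∧ domOf Θ = domOf w ∧ SubPrefixCode (domOf w) (domOf w')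
  | .nil => ⟨.coll_nil, ⟨List.nodup_nil, by simpa using IsPrefixCode.empty, by simp⟩, by simp,
      by simpa [SubPrefixCode] using IsPrefixCode.empty⟩
  | .cons hbody hrest =>
    have ⟨hℓ, hpc, hv, hws⟩ := hw.coll_cons_inv
    have ⟨hbw, hT⟩ := hbody.prefixLabeled (hγ.cons hv)
    have ⟨hw', hΘ, hdom, hsub⟩ := hrest.prefixLabeled hγ hws
    ⟨.coll_relabel_append hpc hℓ hbw hw' hsub, hΘ.cons hT (hdom ▸ hℓ) (hdom ▸ hpc),
      by rw [domOf_cons, domOf_cons, hdom], by simpa using hsub.relabel_append hpc⟩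

theorem EvalFields.prefixLabeled {γ : Env} {es : List (FName × Expr)} {vs : List (FName × Value)}
    {Ts : List (FName × Trace)} (hγ : PLEnv γ) :
    EvalFields γ es vs Ts → (∀ q ∈ vs, PLValue q.2) ∧ ∀ q ∈ Ts, PLTrace q.2
  | .nil => ⟨by simp, by simp⟩
  | .cons h hs =>
    have ih := h.prefixLabeled hγ
    have ihs := hs.prefixLabeled hγ
    ⟨List.forall_mem_cons.2 ⟨ih.1, ihs.1⟩, List.forall_mem_cons.2 ⟨ih.2, ihs.2⟩⟩

end

/-- Theorem 2.2: traced evaluation preserves the prefix-labeling invariant. -/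
theorem eval_prefix_labeled :
    (∀ (γ : Env) (e : Expr) (v : Value) (T : Trace),
      PLEnv γ → Eval γ e v T → PLValue v ∧ PLTrace T) ∧
    (∀ (γ : Env) (x : Var) (e : Expr) (w w' : List (Label × Value))
        (Θ : List (Label × Trace)),
      PLEnv γ → PLValue (.coll w) → EvalStar γ x e w w' Θ →
      PLValue (.coll w') ∧ PLTraceSet Θ ∧
        domOf Θ = domOf w ∧ SubPrefixCode (domOf w) (domOf w')) :=
  ⟨fun _ _ _ _ hγ h => h.prefixLabeled hγ, fun _ _ _ _ _ _ hγ hw h => h.prefixLabeled hγ hw⟩
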